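/- Let 1 < k < n and let G be a simple graph of order n with q_{k+1}(G) = n − 2. Then the complement of G has either k balanced bipartite components or at least k + 1 bipartite components. -/

import Mathlib

open Matrix SimpleGraph
open scoped Classical

/-- The `k`-th largest eigenvalue (1-indexed, counted with multiplicity) of a real
symmetric (Hermitian) matrix; junk value `0` if `M` is not Hermitian or `k` is out of range. -/
noncomputable def kthEig {V : Type*} [Fintype V] [DecidableEq V]
    (M : Matrix V V ℝ) (k : ℕ) : ℝ :=
  if hM : M.IsHermitian then
    if h : k - 1 < Fintype.card V then
      letI f : Fin (Fintype.card V) → ℝ := hM.eigenvalues ∘ (Fintype.equivFin V).symm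
      (f ∘ Tuple.sort f) (Fin.rev ⟨k - 1, h⟩)
    else 0
  else 0

/-- The signless Laplacian `Q(G) = D(G) + A(G)` of a simple graph `G`. -/
noncomputable def signlessLap {V : Type*} [Fintype V] [DecidableEq V]
    (G : SimpleGraph V) [DecidableRel G.Adj] : Matrix V V ℝ :=
  G.degMatrix ℝ + G.adjMatrix ℝ

/-- `qEig G k` is the `k`-th largest signless Laplacian eigenvalue `q_k(G)`. -/
noncomputable def qEig {V : Type*} [Fintype V] [DecidableEq V]
    (G : SimpleGraph V) [DecidableRel G.Adj] (k : ℕ) : ℝ :=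
  kthEig (signlessLap G) k

/-- `c` is a bipartite connected component of `H`: the vertex set of the component splits
into two disjoint classes `U`, `W` such that every edge of the component joins `U` and `W`. -/
def IsBipartiteComponent {V : Type*} (H : SimpleGraph V) (c : H.ConnectedComponent) : Prop :=
  ∃ U W : Set V, U ∪ W = c.supp ∧ Disjoint U W ∧
    ∀ ⦃u v : V⦄, u ∈ c.supp → H.Adj u v → (u ∈ U ∧ v ∈ W) ∨ (u ∈ W ∧ v ∈ U)

/-- `c` is a balanced bipartite connected component of `H`: bipartite with vertex classes
of equal size. -/
def IsBalancedBipartiteComponent {V : Type*} (H : SimpleGraph V)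
    (c : H.ConnectedComponent) : Prop :=
  ∃ U W : Set V, U ∪ W = c.supp ∧ Disjoint U W ∧ U.ncard = W.ncard ∧
    ∀ ⦃u v : V⦄, u ∈ c.supp → H.Adj u v → (u ∈ U ∧ v ∈ W) ∨ (u ∈ W ∧ v ∈ U)

/-- `G` is the complete multipartite graph whose parts are the fibers of `p`:
two vertices are adjacent iff they lie in different parts. -/
def IsCompleteMultipartiteWith {V ι : Type*} (G : SimpleGraph V) (p : V → ι) : Prop :=
  ∀ u v : V, G.Adj u v ↔ p u ≠ p v

/-! Write `Q` for the signless Laplacian and `𝟙` for the all-ones vector. Since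
`Q(G) + Q(Gᶜ) = (n - 2) I + J`, on the hyperplane `𝟙ᗮ` the quadratic form of `Q(G)` is strictly
below `n - 2` outside the null space `K` of `Q(Gᶜ)`, whose vectors take opposite values at the two
ends of every edge of `Gᶜ`. A Courant–Fischer argument turns the `k + 1` eigenvalues `≥ n - 2`
into `dim (K ⊓ 𝟙ᗮ) ≥ k`. A vector of `K` vanishes off the bipartite components of `Gᶜ` and is
determined by one value on each of them, so `dim K` is at most their number. If every bipartite
component is balanced we are done; otherwise the signed indicator of an unbalanced one lies in `K`
but not in `𝟙ᗮ`, so `dim K ≥ k + 1`. -/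

open Finset Module WithLp
open scoped RealInnerProductSpace

namespace EuclideanSpace

variable {V : Type*} [Fintype V]

lemma dotProduct_ofLp_eq_inner (y z : EuclideanSpace ℝ V) : ofLp y ⬝ᵥ ofLp z = ⟪y, z⟫ := by
  simp [inner_eq_star_dotProduct, dotProduct_comm]

lemma mem_orthogonal_span_one_iff {x : EuclideanSpace ℝ V} :
    x ∈ (ℝ ∙ (toLp 2 1 : EuclideanSpace ℝ V))ᗮ ↔ ∑ v, x v = 0 := by
  rw [Submodule.mem_orthogonal_singleton_iff_inner_right, ← dotProduct_ofLp_eq_inner]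
  simp [dotProduct]

end EuclideanSpace

namespace Matrix.IsHermitian

variable {V : Type*} [Fintype V] [DecidableEq V] {M : Matrix V V ℝ} (hM : M.IsHermitian)

lemma le_card_filter_kthEig_le {j : ℕ} (hj : j ≤ Fintype.card V) :
    j ≤ #{i | kthEig M j ≤ hM.eigenvalues i} := by
  rcases j.eq_zero_or_pos with rfl | hj0
  · exact Nat.zero_le _
  have hlt : j - 1 < Fintype.card V := by omega
  set f := hM.eigenvalues ∘ (Fintype.equivFin V).symm
  have hsorted : kthEig M j = (f ∘ Tuple.sort f) (Fin.rev ⟨j - 1, hlt⟩) := by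
    rw [kthEig, dif_pos hM, dif_pos hlt]
  have hIci : #(Ici (Fin.rev ⟨j - 1, hlt⟩)) = j := by
    rw [Fin.card_Ici, Fin.val_rev, Fin.val_mk]
    omega
  calc j = #(Ici (Fin.rev ⟨j - 1, hlt⟩)) := hIci.symm
    _ ≤ #{a | kthEig M j ≤ (f ∘ Tuple.sort f) a} :=
        card_le_card fun a ha => mem_filter.2
          ⟨mem_univ a, hsorted ▸ Tuple.monotone_sort f (mem_Ici.1 ha)⟩
    _ = #{i | kthEig M j ≤ hM.eigenvalues i} :=
        card_equiv ((Tuple.sort f).trans (Fintype.equivFin V).symm) fun _ => by simp [f]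

lemma mul_dotProduct_le_of_mem_span_eigenvectorBasis {c : ℝ} {x : EuclideanSpace ℝ V}
    (hx : x ∈ Submodule.span ℝ
      (Set.range fun i : {i // c ≤ hM.eigenvalues i} => hM.eigenvectorBasis i)) :
    c * (ofLp x ⬝ᵥ ofLp x) ≤ ofLp x ⬝ᵥ (M *ᵥ ofLp x) := by
  obtain ⟨a, rfl⟩ := (Submodule.mem_span_range_iff_exists_fun ℝ).1 hx
  have hb : Orthonormal ℝ fun i : {i // c ≤ hM.eigenvalues i} => hM.eigenvectorBasis i :=
    hM.eigenvectorBasis.orthonormal.comp _ Subtype.val_injective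
  have hMx : M *ᵥ ofLp (∑ i, a i • hM.eigenvectorBasis i) =
      ofLp (∑ i : {i // c ≤ hM.eigenvalues i},
        (hM.eigenvalues i * a i) • hM.eigenvectorBasis i) := by
    simp [ofLp_sum, mulVec_sum, mulVec_smul, hM.mulVec_eigenvectorBasis, smul_smul, mul_comm]
  rw [hMx, EuclideanSpace.dotProduct_ofLp_eq_inner, EuclideanSpace.dotProduct_ofLp_eq_inner,
    hb.inner_sum, hb.inner_sum, mul_sum]
  refine sum_le_sum fun i _ => ?_
  have := mul_le_mul_of_nonneg_right i.2 (mul_self_nonneg (a i))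
  simp only [conj_trivial]
  linarith

lemma card_filter_le_eigenvalues_add_finrank_le {c : ℝ} {S : Submodule ℝ (EuclideanSpace ℝ V)}
    (hS : ∀ x ∈ S, x ≠ 0 → ofLp x ⬝ᵥ (M *ᵥ ofLp x) < c * (ofLp x ⬝ᵥ ofLp x)) :
    #{i | c ≤ hM.eigenvalues i} + finrank ℝ S ≤ Fintype.card V := by
  set P := Submodule.span ℝ
    (Set.range fun i : {i // c ≤ hM.eigenvalues i} => hM.eigenvectorBasis i)
  have hP : finrank ℝ P = #{i | c ≤ hM.eigenvalues i} := by
    have hb : Orthonormal ℝ fun i : {i // c ≤ hM.eigenvalues i} => hM.eigenvectorBasis i :=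
      hM.eigenvectorBasis.orthonormal.comp _ Subtype.val_injective
    rw [finrank_span_eq_card hb.linearIndependent, Fintype.card_subtype]
  have hdisj : Disjoint P S := Submodule.disjoint_def.2 fun x hxP hxS => by
    by_contra hx
    exact (hS x hxS hx).not_ge (hM.mul_dotProduct_le_of_mem_span_eigenvectorBasis hxP)
  rw [← hP, ← finrank_euclideanSpace (𝕜 := ℝ)]
  exact Submodule.finrank_add_finrank_le_of_disjoint hdisj

lemma card_filter_le_eigenvalues_le_finrank_add_finrank {c : ℝ}
    (K L : Submodule ℝ (EuclideanSpace ℝ V))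
    (h : ∀ x ∈ Lᗮ, x ∉ K → ofLp x ⬝ᵥ (M *ᵥ ofLp x) < c * (ofLp x ⬝ᵥ ofLp x)) :
    #{i | c ≤ hM.eigenvalues i} ≤ finrank ℝ ↥(K ⊓ Lᗮ) + finrank ℝ L := by
  have hS : ∀ x ∈ (K ⊓ Lᗮ)ᗮ ⊓ Lᗮ, x ≠ 0 →
      ofLp x ⬝ᵥ (M *ᵥ ofLp x) < c * (ofLp x ⬝ᵥ ofLp x) := by
    rintro x ⟨hx, hxL⟩ hx0
    refine h x hxL fun hxK => hx0 ?_
    exact (Submodule.mem_bot ℝ).1 <| (K ⊓ Lᗮ).inf_orthogonal_eq_bot ▸ ⟨⟨hxK, hxL⟩, hx⟩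
  have h₁ := Submodule.finrank_add_inf_finrank_orthogonal (inf_le_right : K ⊓ Lᗮ ≤ Lᗮ)
  have h₂ := L.finrank_add_finrank_orthogonal
  rw [finrank_euclideanSpace] at h₂
  have := hM.card_filter_le_eigenvalues_add_finrank_le hS
  omega

end Matrix.IsHermitian

namespace SimpleGraph

-- The null space of `signlessLap H`, by `dotProduct_signlessLap_mulVec`.
def signlessKer {W : Type*} (H : SimpleGraph W) : Submodule ℝ (EuclideanSpace ℝ W) where
  carrier := {x | ∀ ⦃u v⦄, H.Adj u v → x u = -x v}
  zero_mem' _ := by simp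
  add_mem' hx hy u v huv := by simp [hx huv, hy huv, add_comm]
  smul_mem' a x hx u v huv := by simp [hx huv]

section SignlessKer

variable {W : Type*} {H : SimpleGraph W} {x : EuclideanSpace ℝ W}

@[simp]
lemma mem_signlessKer : x ∈ H.signlessKer ↔ ∀ ⦃u v⦄, H.Adj u v → x u = -x v := Iff.rfl

lemma eq_or_eq_neg_of_reachable (hx : x ∈ H.signlessKer) {u v : W} (huv : H.Reachable u v) :
    x v = x u ∨ x v = -x u := by
  obtain ⟨p⟩ := huv
  induction p with
  | nil => exact Or.inl rfl
  | @cons a b _ hadj _ ih =>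
    rw [show x b = -x a by rw [hx hadj, neg_neg], neg_neg] at ih
    exact ih.symm

lemma isBipartiteComponent_of_mem_signlessKer (hx : x ∈ H.signlessKer) {v : W} (hv : x v ≠ 0) :
    IsBipartiteComponent H (H.connectedComponentMk v) := by
  have hsupp : ∀ w, w ∈ (H.connectedComponentMk v).supp ↔ H.Reachable v w := fun w => by
    rw [ConnectedComponent.mem_supp_iff, ConnectedComponent.eq, reachable_comm]
  refine ⟨{w | H.Reachable v w ∧ x w = x v}, {w | H.Reachable v w ∧ x w = -x v}, ?_, ?_, ?_⟩
  · ext w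
    rw [hsupp]
    constructor
    · rintro (⟨h, _⟩ | ⟨h, _⟩) <;> exact h
    · intro h
      exact (eq_or_eq_neg_of_reachable hx h).imp (⟨h, ·⟩) (⟨h, ·⟩)
  · refine Set.disjoint_left.2 fun w ⟨_, h₁⟩ ⟨_, h₂⟩ => hv ?_
    linarith
  · intro u w hu huw
    rw [hsupp] at hu
    have hw : H.Reachable v w := hu.trans huw.reachable
    have hxw : x w = -x u := by rw [hx huw, neg_neg]
    rcases eq_or_eq_neg_of_reachable hx hu with h | h
    · exact Or.inl ⟨⟨hu, h⟩, hw, by rw [hxw, h]⟩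
    · exact Or.inr ⟨⟨hu, h⟩, hw, by rw [hxw, h, neg_neg]⟩

lemma finrank_signlessKer_le [Fintype W] :
    finrank ℝ H.signlessKer ≤ {c : H.ConnectedComponent | IsBipartiteComponent H c}.ncard := by
  set B := {c : H.ConnectedComponent | IsBipartiteComponent H c}
  let φ : H.signlessKer →ₗ[ℝ] B → ℝ :=
    { toFun := fun x c => x.1 c.1.out
      map_add' := fun _ _ => rfl
      map_smul' := fun _ _ => rfl }
  have hφ : Function.Injective φ := by
    refine (injective_iff_map_eq_zero φ).2 fun x hx => ?_
    ext v
    by_contra hv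
    have hb : H.connectedComponentMk v ∈ B := isBipartiteComponent_of_mem_signlessKer x.2 hv
    have hout : H.Reachable (H.connectedComponentMk v).out v :=
      ConnectedComponent.exact (H.connectedComponentMk v).out_eq
    have h0 : x.1 (H.connectedComponentMk v).out = 0 := congrFun hx ⟨_, hb⟩
    rcases eq_or_eq_neg_of_reachable x.2 hout with h | h <;> simp [h, h0] at hv
  calc finrank ℝ H.signlessKer ≤ finrank ℝ (B → ℝ) :=
        LinearMap.finrank_le_finrank_of_injective hφ
    _ = B.ncard := by
        rw [finrank_fintype_fun_eq_card, Set.ncard_eq_toFinset_card', Set.toFinset_card]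

lemma exists_mem_signlessKer_sum_ne_zero [Fintype W] {c : H.ConnectedComponent}
    (hc : IsBipartiteComponent H c) (hbal : ¬IsBalancedBipartiteComponent H c) :
    ∃ x ∈ H.signlessKer, ∑ v, x v ≠ 0 := by
  obtain ⟨U, U', hUU', hdisj, hedge⟩ := hc
  refine ⟨toLp 2 fun v => (if v ∈ U then 1 else 0) - (if v ∈ U' then 1 else 0), ?_, ?_⟩
  · intro u v huv
    by_cases hu : u ∈ c.supp
    · rcases hedge hu huv with ⟨h₁, h₂⟩ | ⟨h₁, h₂⟩
      · simp [h₁, h₂, Set.disjoint_left.1 hdisj h₁, Set.disjoint_right.1 hdisj h₂]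
      · simp [h₁, h₂, Set.disjoint_left.1 hdisj h₂, Set.disjoint_right.1 hdisj h₁]
    · have hv : v ∉ c.supp := fun hv => hu (c.mem_supp_congr_adj huv |>.2 hv)
      rw [← hUU'] at hu hv
      simp only [Set.mem_union, not_or] at hu hv
      simp [hu, hv]
  · intro hsum
    apply hbal
    refine ⟨U, U', hUU', hdisj, ?_, hedge⟩
    simpa only [sum_sub_distrib, sum_boole, Set.filter_mem_univ_eq_toFinset,
      ← Set.ncard_eq_toFinset_card', sub_eq_zero, Nat.cast_inj] using hsum

end SignlessKer

variable {V : Type*} [Fintype V] [DecidableEq V] (G : SimpleGraph V) [DecidableRel G.Adj]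

lemma isHermitian_signlessLap : (signlessLap G).IsHermitian :=
  (G.isHermitian_degMatrix ℝ).add (G.isHermitian_adjMatrix ℝ)

lemma dotProduct_signlessLap_mulVec (x : V → ℝ) :
    x ⬝ᵥ (signlessLap G *ᵥ x) = (∑ i, ∑ j, if G.Adj i j then (x i + x j) ^ 2 else 0) / 2 := by
  simp_rw [signlessLap, add_mulVec, dotProduct_add, dotProduct_mulVec_degMatrix,
    dotProduct_mulVec_adjMatrix, ← sum_add_distrib, degree_eq_sum_if_adj, sum_mul, ite_mul,
    one_mul, zero_mul, ← sum_add_distrib, ite_add_ite, add_zero]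
  rw [← add_self_div_two (∑ i, ∑ j, _)]
  conv_lhs => enter [1, 2, 2, i, 2, j]; rw [if_congr (G.adj_comm i j) rfl rfl]
  conv_lhs => enter [1, 2]; rw [Finset.sum_comm]
  simp_rw [← sum_add_distrib, ite_add_ite]
  congr 2 with i
  congr 2 with j
  ring_nf

lemma degree_add_degree_compl (v : V) :
    (G.degree v + Gᶜ.degree v : ℝ) = Fintype.card V - 1 := by
  have := G.degree_lt_card_verts v
  rw [degree_compl, Nat.cast_sub (by omega), Nat.cast_sub (by omega)]
  ring

lemma signlessLap_add_signlessLap_compl :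
    signlessLap G + signlessLap Gᶜ = ((Fintype.card V : ℝ) - 2) • 1 + Matrix.of 1 := by
  ext i j
  rcases eq_or_ne i j with rfl | hij
  · simp only [signlessLap, degMatrix, Matrix.add_apply, Matrix.diagonal_apply_eq,
      adjMatrix_apply, SimpleGraph.irrefl, if_false, add_zero, Matrix.smul_apply,
      Matrix.one_apply_eq, smul_eq_mul, mul_one, Matrix.of_apply, Pi.one_apply]
    linarith [G.degree_add_degree_compl i]
  · by_cases h : G.Adj i j <;> simp [signlessLap, degMatrix, hij, h]

lemma dotProduct_signlessLap_mulVec_add_compl (x : V → ℝ) :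
    x ⬝ᵥ (signlessLap G *ᵥ x) + x ⬝ᵥ (signlessLap Gᶜ *ᵥ x) =
      (Fintype.card V - 2) * (x ⬝ᵥ x) + (∑ i, x i) ^ 2 := by
  rw [← dotProduct_add, ← add_mulVec, signlessLap_add_signlessLap_compl, add_mulVec,
    dotProduct_add, smul_mulVec, one_mulVec, dotProduct_smul, smul_eq_mul]
  simp [sq, dotProduct, mulVec, Finset.sum_mul]

lemma dotProduct_signlessLap_mulVec_pos {x : EuclideanSpace ℝ V} (hx : x ∉ G.signlessKer) :
    0 < ofLp x ⬝ᵥ (signlessLap G *ᵥ ofLp x) := by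
  obtain ⟨u, v, huv, hne⟩ : ∃ u v, G.Adj u v ∧ x u ≠ -x v := by simpa using hx
  have hpos : 0 < (x u + x v) ^ 2 := by
    have : x u + x v ≠ 0 := fun h => hne (eq_neg_of_add_eq_zero_left h)
    positivity
  rw [dotProduct_signlessLap_mulVec]
  refine div_pos (sum_pos' (fun i _ => sum_nonneg fun j _ => ?_) ⟨u, mem_univ u, ?_⟩) two_pos
  · split_ifs <;> positivity
  · exact sum_pos' (fun j _ => by split_ifs <;> positivity) ⟨v, mem_univ v, by simpa [huv]⟩

lemma dotProduct_signlessLap_mulVec_lt {x : EuclideanSpace ℝ V} (hsum : ∑ v, x v = 0)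
    (hx : x ∉ Gᶜ.signlessKer) :
    ofLp x ⬝ᵥ (signlessLap G *ᵥ ofLp x) < (Fintype.card V - 2) * (ofLp x ⬝ᵥ ofLp x) := by
  have h := G.dotProduct_signlessLap_mulVec_add_compl (ofLp x)
  rw [hsum] at h
  linarith [Gᶜ.dotProduct_signlessLap_mulVec_pos hx]

end SimpleGraph

theorem components_of_qk_succ_general (n k : ℕ) (hkn : k < n)
    (G : SimpleGraph (Fin n)) [DecidableRel G.Adj]
    (h : qEig G (k + 1) = (n : ℝ) - 2) :
    k ≤ {c : Gᶜ.ConnectedComponent | IsBalancedBipartiteComponent Gᶜ c}.ncard ∨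
    k + 1 ≤ {c : Gᶜ.ConnectedComponent | IsBipartiteComponent Gᶜ c}.ncard := by
  have hM := G.isHermitian_signlessLap
  set K := Gᶜ.signlessKer
  set L : Submodule ℝ (EuclideanSpace ℝ (Fin n)) := ℝ ∙ toLp 2 1
  have hcount : k + 1 ≤ #{i | (n : ℝ) - 2 ≤ hM.eigenvalues i} := by
    rw [← h]
    exact hM.le_card_filter_kthEig_le (by rw [Fintype.card_fin]; omega)
  have hKL := hM.card_filter_le_eigenvalues_le_finrank_add_finrank K L fun x hxL hxK => by
    simpa using G.dotProduct_signlessLap_mulVec_lt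
      (EuclideanSpace.mem_orthogonal_span_one_iff.1 hxL) hxK
  have hL : finrank ℝ L ≤ 1 := (finrank_span_le_card _).trans (by simp)
  have hK : finrank ℝ K ≤ _ := Gᶜ.finrank_signlessKer_le
  by_cases hbal : ∀ c, IsBipartiteComponent Gᶜ c → IsBalancedBipartiteComponent Gᶜ c
  · left
    have hsets : {c | IsBalancedBipartiteComponent Gᶜ c} = {c | IsBipartiteComponent Gᶜ c} :=
      Set.ext fun c => ⟨fun ⟨U, W, hUW, hdisj, _, hedge⟩ => ⟨U, W, hUW, hdisj, hedge⟩, hbal c⟩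
    have := Submodule.finrank_mono (inf_le_left : K ⊓ Lᗮ ≤ K)
    rw [hsets]
    omega
  · right
    push Not at hbal
    obtain ⟨c, hc, hcbal⟩ := hbal
    obtain ⟨x, hxK, hsum⟩ := exists_mem_signlessKer_sum_ne_zero hc hcbal
    have hlt : K ⊓ Lᗮ < K := lt_of_le_of_ne inf_le_left fun heq =>
      hsum (EuclideanSpace.mem_orthogonal_span_one_iff.1 (heq.ge hxK).2)
    have := Submodule.finrank_lt_finrank_of_lt hlt
    omega

/-- Let `1 < k < n` and let `G` be a graph of order `n` with `q_{k+1}(G) = n - 2`. Then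
the complement of `G` has `k` balanced bipartite components or at least `k + 1` bipartite
components. -/
theorem components_of_qk_succ (n k : ℕ) (hk1 : 1 < k) (hkn : k < n)
    (G : SimpleGraph (Fin n)) [DecidableRel G.Adj]
    (h : qEig G (k + 1) = (n : ℝ) - 2) :
    k ≤ {c : Gᶜ.ConnectedComponent | IsBalancedBipartiteComponent Gᶜ c}.ncard ∨
    k + 1 ≤ {c : Gᶜ.ConnectedComponent | IsBipartiteComponent Gᶜ c}.ncard :=
  components_of_qk_succ_general n k hkn G h
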